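/- L² estimate for the first sensitivity equation (Lemma 5.5, classical form): Let q₁ : [0,l] → ℝ be continuous with q₁ ≥ 0, 𝒬 : [0,l] → ℝ bounded, and u₂ : Q̄ → ℝ continuous. Let U be continuous on Q̄ with U_t, U_x, U_{xx} continuous on [0,l] × (0,T], satisfying U_t − (a(x)U_x)_x + q₁(x)U = −𝒬(x)u₂(x,t) for every (x,t) ∈ [0,l] × (0,T], U(x,0) = 0 for every x ∈ [0,l], and U_x bounded on Q. Then there exists a constant C > 0 depending only on T such that max_{0≤t≤T} ∫₀^l U(x,t)² dx ≤ C · (sup_{[0,l]} |𝒬|)² · ∫₀^T∫₀^l |u₂(x,t)|² dx dt. -/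

import Mathlib

open Set MeasureTheory

/-!
Let `E t = ∫₀ˡ U(x,t)² dx`, so that `E' = 2 ∫₀ˡ U U_t` on `(0,T)`. Substitute the equation and
integrate `U (a U_x)_x` by parts: the boundary terms vanish since `a 0 = a l = 0`, leaving
`-∫₀ˡ a U_x² ≤ 0`. With `q₁ ≥ 0` and `2 |𝒬 u₂ U| ≤ U² + 𝒬² u₂²` this gives
`E' ≤ E + M² ∫₀ˡ u₂²` for `M = sup |𝒬|`. As `E 0 = 0` and `t ↦ e^{-t} E t - M² ∫₀ᵗ∫₀ˡ u₂²` is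
antitone (Grönwall), the estimate holds with `C = e^T`.
-/

theorem le_exp_mul_add_integral_of_hasDerivAt_le_add {E E' h : ℝ → ℝ} {a b : ℝ} (hab : a ≤ b)
    (hE : ContinuousOn E (Icc a b)) (hE' : ∀ t ∈ Ioo a b, HasDerivAt E (E' t) t)
    (hh : ContinuousOn h (Icc a b)) (hh₀ : ∀ t ∈ Icc a b, 0 ≤ h t)
    (hle : ∀ t ∈ Ioo a b, E' t ≤ E t + h t) :
    E b ≤ Real.exp (b - a) * (E a + ∫ t in a..b, h t) := by
  set F : ℝ → ℝ := fun t => Real.exp (-(t - a)) * E t - ∫ s in a..t, h s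
  have hFc : ContinuousOn F (Icc a b) := by
    refine ((Real.continuous_exp.comp_continuousOn (by fun_prop)).mul hE).sub ?_
    simpa [uIcc_of_le hab] using
      intervalIntegral.continuousOn_primitive_interval (hh.integrableOn_Icc.mono_set
        (uIcc_of_le hab).subset)
  have hF' : ∀ t ∈ Ioo a b, HasDerivAt F
      (-Real.exp (-(t - a)) * E t + Real.exp (-(t - a)) * E' t - h t) t := by
    intro t ht
    have hexp : HasDerivAt (fun t => Real.exp (-(t - a))) (-Real.exp (-(t - a))) t := by
      simpa using ((hasDerivAt_id t).sub_const a).neg.exp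
    have hprim : HasDerivAt (fun t => ∫ s in a..t, h s) (h t) t :=
      intervalIntegral.integral_hasDerivAt_right
        (hh.mono (Icc_subset_Icc_right ht.2.le) |>.intervalIntegrable_of_Icc ht.1.le)
        (hh.mono Ioo_subset_Icc_self |>.stronglyMeasurableAtFilter isOpen_Ioo t ht)
        (hh.continuousAt (Icc_mem_nhds ht.1 ht.2))
    exact (hexp.mul (hE' t ht)).sub hprim
  have hanti : AntitoneOn F (Icc a b) := by
    refine antitoneOn_of_hasDerivWithinAt_nonpos (convex_Icc a b) hFc
      (f' := fun t => -Real.exp (-(t - a)) * E t + Real.exp (-(t - a)) * E' t - h t)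
      (fun t ht => ?_) (fun t ht => ?_) <;> rw [interior_Icc] at ht
    · exact (hF' t ht).hasDerivWithinAt
    · have hexp_le : Real.exp (-(t - a)) ≤ 1 := Real.exp_le_one_iff.2 (by linarith [ht.1])
      nlinarith [Real.exp_pos (-(t - a)), hle t ht, hh₀ t (Ioo_subset_Icc_self ht)]
  have hFab : F b ≤ F a := hanti ⟨le_rfl, hab⟩ ⟨hab, le_rfl⟩ hab
  simp only [F, sub_self, neg_zero, Real.exp_zero, one_mul, intervalIntegral.integral_same,
    sub_zero] at hFab
  have hEb : E b = Real.exp (b - a) * (Real.exp (-(b - a)) * E b) := by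
    rw [← mul_assoc, ← Real.exp_add]; simp
  rw [hEb]
  gcongr
  linarith

theorem le_exp_mul_integral_of_hasDerivAt_le_add {E E' h : ℝ → ℝ} {a b t : ℝ}
    (hE : ContinuousOn E (Icc a b)) (hEa : E a = 0) (hE' : ∀ t ∈ Ioo a b, HasDerivAt E (E' t) t)
    (hh : ContinuousOn h (Icc a b)) (hh₀ : ∀ t ∈ Icc a b, 0 ≤ h t)
    (hle : ∀ t ∈ Ioo a b, E' t ≤ E t + h t) (ht : t ∈ Icc a b) :
    E t ≤ Real.exp (b - a) * ∫ s in a..b, h s := by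
  have hsub : Icc a t ⊆ Icc a b := Icc_subset_Icc_right ht.2
  have hsub' : Ioo a t ⊆ Ioo a b := Ioo_subset_Ioo_right ht.2
  calc E t ≤ Real.exp (t - a) * (E a + ∫ s in a..t, h s) :=
        le_exp_mul_add_integral_of_hasDerivAt_le_add ht.1 (hE.mono hsub)
          (fun s hs => hE' s (hsub' hs)) (hh.mono hsub) (fun s hs => hh₀ s (hsub hs))
          (fun s hs => hle s (hsub' hs))
    _ ≤ Real.exp (b - a) * ∫ s in a..b, h s := by
        rw [hEa, zero_add]
        gcongr
        · exact intervalIntegral.integral_nonneg ht.1 fun s hs => hh₀ s (hsub hs)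
        · exact ht.2
        · exact intervalIntegral.integral_mono_interval le_rfl ht.1 ht.2
            ((ae_restrict_iff' measurableSet_Ioc).2
              (ae_of_all _ fun s hs => hh₀ s (Ioc_subset_Icc_self hs)))
            (hh.intervalIntegrable_of_Icc (ht.1.trans ht.2))

theorem continuousOn_intervalIntegral_of_continuousOn_prod {f : ℝ → ℝ → ℝ} {a b c d : ℝ}
    (hab : a ≤ b) (hcd : c ≤ d)
    (hf : ContinuousOn (fun p : ℝ × ℝ => f p.1 p.2) (Icc a b ×ˢ Icc c d)) :
    ContinuousOn (fun t => ∫ x in a..b, f x t) (Icc c d) := by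
  set g : ℝ → ℝ → ℝ := fun x t => f (projIcc a b hab x) (projIcc c d hcd t)
  have hg : Continuous (fun p : ℝ × ℝ => g p.1 p.2) :=
    hf.comp_continuous
      (f := fun p : ℝ × ℝ => ((projIcc a b hab p.1 : ℝ), (projIcc c d hcd p.2 : ℝ)))
      (by fun_prop) fun p => ⟨(projIcc a b hab p.1).2, (projIcc c d hcd p.2).2⟩
  refine (intervalIntegral.continuous_parametric_intervalIntegral_of_continuous'
    (f := fun t x => g x t) (by exact hg.comp continuous_swap) a b).continuousOn.congr
    fun t ht => intervalIntegral.integral_congr fun x hx => ?_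
  rw [uIcc_of_le hab] at hx
  simp [g, projIcc_of_mem _ hx, projIcc_of_mem _ ht]

theorem hasDerivAt_intervalIntegral_of_continuousOn_prod {f f' : ℝ → ℝ → ℝ} {a b c d t : ℝ}
    (hab : a ≤ b)
    (hf : ContinuousOn (fun p : ℝ × ℝ => f p.1 p.2) (Icc a b ×ˢ Icc c d))
    (hf' : ContinuousOn (fun p : ℝ × ℝ => f' p.1 p.2) (Icc a b ×ˢ Icc c d))
    (hderiv : ∀ x ∈ Icc a b, ∀ τ ∈ Ioo c d, HasDerivAt (f x ·) (f' x τ) τ)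
    (ht : t ∈ Ioo c d) :
    HasDerivAt (fun τ => ∫ x in a..b, f x τ) (∫ x in a..b, f' x t) t := by
  obtain ⟨B, hB⟩ := (isCompact_Icc.prod isCompact_Icc).exists_bound_of_continuousOn hf'
  have hsection : ∀ {g : ℝ → ℝ → ℝ},
      ContinuousOn (fun p : ℝ × ℝ => g p.1 p.2) (Icc a b ×ˢ Icc c d) → ∀ τ ∈ Icc c d,
        AEStronglyMeasurable (g · τ) (volume.restrict (uIoc a b)) := fun hg τ hτ => by
    rw [uIoc_of_le hab]
    exact ((hg.uncurry_right τ hτ).mono Ioc_subset_Icc_self).aestronglyMeasurable measurableSet_Ioc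
  refine (intervalIntegral.hasDerivAt_integral_of_dominated_loc_of_deriv_le
    (F := fun τ x => f x τ) (F' := fun τ x => f' x τ) (bound := fun _ => B)
    (isOpen_Ioo.mem_nhds ht) ?_ ?_
    (hsection hf' t (Ioo_subset_Icc_self ht)) ?_ intervalIntegrable_const ?_).2
  · filter_upwards [isOpen_Ioo.mem_nhds ht] with τ hτ
    exact hsection hf τ (Ioo_subset_Icc_self hτ)
  · exact (hf.uncurry_right t (Ioo_subset_Icc_self ht)).intervalIntegrable_of_Icc hab
  · refine Filter.Eventually.of_forall fun x hx τ hτ => hB (x, τ) ⟨?_, Ioo_subset_Icc_self hτ⟩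
    rw [uIoc_of_le hab] at hx
    exact Ioc_subset_Icc_self hx
  · refine Filter.Eventually.of_forall fun x hx τ hτ => hderiv x ?_ τ hτ
    rw [uIoc_of_le hab] at hx
    exact Ioc_subset_Icc_self hx

theorem hasDerivAt_intervalIntegral_sq {U Ut : ℝ → ℝ → ℝ} {a b c d t : ℝ} (hab : a ≤ b)
    (hU : ContinuousOn (fun p : ℝ × ℝ => U p.1 p.2) (Icc a b ×ˢ Icc c d))
    (hUt : ContinuousOn (fun p : ℝ × ℝ => Ut p.1 p.2) (Icc a b ×ˢ Ioc c d))
    (hderiv : ∀ x ∈ Icc a b, ∀ τ ∈ Ioc c d, HasDerivWithinAt (U x ·) (Ut x τ) (Icc c d) τ)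
    (ht : t ∈ Ioo c d) :
    HasDerivAt (fun τ => ∫ x in a..b, U x τ ^ 2) (∫ x in a..b, 2 * U x t * Ut x t) t := by
  obtain ⟨c', hcc', hc't⟩ := exists_between ht.1
  have hsub : Icc c' d ⊆ Ioc c d := fun σ hσ => ⟨hcc'.trans_le hσ.1, hσ.2⟩
  refine hasDerivAt_intervalIntegral_of_continuousOn_prod (c := c') (d := d)
    (f := fun x σ => U x σ ^ 2) (f' := fun x σ => 2 * U x σ * Ut x σ) hab
    ((hU.mono (prod_mono_right (hsub.trans Ioc_subset_Icc_self))).pow 2)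
    (((continuousOn_const.mul hU).mono (prod_mono_right (hsub.trans Ioc_subset_Icc_self))).mul
      (hUt.mono (prod_mono_right hsub)))
    (fun x hx σ hσ => ?_) ⟨hc't, ht.2⟩
  have hσ' : σ ∈ Ioc c d := hsub (Ioo_subset_Icc_self hσ)
  exact (((hderiv x hx σ hσ').hasDerivAt (Icc_mem_nhds hσ'.1 hσ.2)).pow 2).congr_deriv (by ring)

theorem integral_mul_flux_deriv_nonpos {a b : ℝ} (hab : a ≤ b) {k k' u u' u'' : ℝ → ℝ}
    (hk : ∀ x ∈ Icc a b, HasDerivWithinAt k (k' x) (Icc a b) x) (hk' : ContinuousOn k' (Icc a b))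
    (hka : k a = 0) (hkb : k b = 0) (hk₀ : ∀ x ∈ Ioo a b, 0 ≤ k x)
    (hu : ∀ x ∈ Icc a b, HasDerivWithinAt u (u' x) (Icc a b) x)
    (hu' : ∀ x ∈ Icc a b, HasDerivWithinAt u' (u'' x) (Icc a b) x)
    (hu'' : ContinuousOn u'' (Icc a b)) :
    ∫ x in a..b, u x * (k x * u'' x + k' x * u' x) ≤ 0 := by
  have hk₀' : ∀ x ∈ Icc a b, 0 ≤ k x := fun x hx => by
    rcases hx.1.eq_or_lt with rfl | hax
    · exact hka.ge
    rcases hx.2.eq_or_lt with rfl | hxb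
    · exact hkb.ge
    exact hk₀ x ⟨hax, hxb⟩
  have hkc : ContinuousOn k (Icc a b) := fun x hx => (hk x hx).continuousWithinAt
  have hu'c : ContinuousOn u' (Icc a b) := fun x hx => (hu' x hx).continuousWithinAt
  rw [← uIcc_of_le hab] at hk hu hu' hk' hu'' hkc hu'c
  have hflux : ∀ x ∈ uIcc a b, HasDerivWithinAt (fun x => k x * u' x)
      (k x * u'' x + k' x * u' x) (uIcc a b) x := fun x hx =>
    ((hk x hx).fun_mul (hu' x hx)).congr_deriv (add_comm _ _)
  rw [intervalIntegral.integral_mul_deriv_eq_deriv_mul_of_hasDerivWithinAt hu hflux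
    hu'c.intervalIntegrable ((hkc.mul hu'').add (hk'.mul hu'c)).intervalIntegrable, hka, hkb]
  have hdissipation : 0 ≤ ∫ x in a..b, u' x * (k x * u' x) :=
    intervalIntegral.integral_nonneg hab fun x hx => by
      nlinarith [mul_nonneg (hk₀' x hx) (sq_nonneg (u' x))]
  linarith

theorem integral_two_mul_mul_le_of_parabolic_eq {a b M : ℝ} (hab : a ≤ b)
    {k k' q Q f u u' u'' v : ℝ → ℝ}
    (hk : ∀ x ∈ Icc a b, HasDerivWithinAt k (k' x) (Icc a b) x) (hk' : ContinuousOn k' (Icc a b))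
    (hka : k a = 0) (hkb : k b = 0) (hk₀ : ∀ x ∈ Ioo a b, 0 ≤ k x)
    (hq : ∀ x ∈ Icc a b, 0 ≤ q x) (hQ : ∀ x ∈ Icc a b, |Q x| ≤ M) (hf : ContinuousOn f (Icc a b))
    (hu : ∀ x ∈ Icc a b, HasDerivWithinAt u (u' x) (Icc a b) x)
    (hu' : ∀ x ∈ Icc a b, HasDerivWithinAt u' (u'' x) (Icc a b) x)
    (hu'' : ContinuousOn u'' (Icc a b)) (hv : ContinuousOn v (Icc a b))
    (heq : ∀ x ∈ Icc a b, v x - (k x * u'' x + k' x * u' x) + q x * u x = -(Q x * f x)) :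
    ∫ x in a..b, 2 * u x * v x ≤ (∫ x in a..b, u x ^ 2) + M ^ 2 * ∫ x in a..b, f x ^ 2 := by
  have hkc : ContinuousOn k (Icc a b) := fun x hx => (hk x hx).continuousWithinAt
  have huc : ContinuousOn u (Icc a b) := fun x hx => (hu x hx).continuousWithinAt
  have hu'c : ContinuousOn u' (Icc a b) := fun x hx => (hu' x hx).continuousWithinAt
  have hfluxc : ContinuousOn (fun x => u x * (k x * u'' x + k' x * u' x)) (Icc a b) :=
    huc.mul ((hkc.mul hu'').add (hk'.mul hu'c))
  have hpointwise : ∀ x ∈ Icc a b, 2 * u x * v x ≤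
      2 * (u x * (k x * u'' x + k' x * u' x)) + (u x ^ 2 + M ^ 2 * f x ^ 2) := fun x hx => by
    have hQM : Q x ^ 2 ≤ M ^ 2 := sq_le_sq' (neg_le_of_abs_le (hQ x hx)) (le_of_abs_le (hQ x hx))
    have hv_eq : v x = k x * u'' x + k' x * u' x - q x * u x - Q x * f x := by linarith [heq x hx]
    rw [hv_eq]
    nlinarith [mul_nonneg (hq x hx) (sq_nonneg (u x)), sq_nonneg (u x + Q x * f x),
      mul_nonneg (sub_nonneg.2 hQM) (sq_nonneg (f x))]
  have hint : ∀ {g : ℝ → ℝ}, ContinuousOn g (Icc a b) → IntervalIntegrable g volume a b :=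
    fun hg => hg.intervalIntegrable_of_Icc hab
  have hi₁ : IntervalIntegrable (fun x => 2 * (u x * (k x * u'' x + k' x * u' x))) volume a b :=
    hint (continuousOn_const.mul hfluxc)
  have hi₂ : IntervalIntegrable (fun x => u x ^ 2) volume a b := hint (huc.pow 2)
  have hi₃ : IntervalIntegrable (fun x => M ^ 2 * f x ^ 2) volume a b :=
    hint (continuousOn_const.mul (hf.pow 2))
  calc ∫ x in a..b, 2 * u x * v x
      ≤ ∫ x in a..b, 2 * (u x * (k x * u'' x + k' x * u' x)) + (u x ^ 2 + M ^ 2 * f x ^ 2) :=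
        intervalIntegral.integral_mono_on hab (hint ((continuousOn_const.mul huc).mul hv))
          (hi₁.add (hi₂.add hi₃)) hpointwise
    _ = 2 * (∫ x in a..b, u x * (k x * u'' x + k' x * u' x)) +
          ((∫ x in a..b, u x ^ 2) + M ^ 2 * ∫ x in a..b, f x ^ 2) := by
        rw [intervalIntegral.integral_add hi₁ (hi₂.add hi₃), intervalIntegral.integral_add hi₂ hi₃,
          intervalIntegral.integral_const_mul, intervalIntegral.integral_const_mul]
    _ ≤ (∫ x in a..b, u x ^ 2) + M ^ 2 * ∫ x in a..b, f x ^ 2 := by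
        linarith [integral_mul_flux_deriv_nonpos hab hk hk' hka hkb hk₀ hu hu' hu'']

/-- L² estimate for the first sensitivity equation (Lemma 5.5, classical form): there is a
constant `C > 0` depending only on `T` such that any bounded classical solution `U` of
`U_t − (aUₓ)ₓ + q₁U = −𝒬u₂` with `U(·,0) = 0` and `Uₓ` bounded on `Q` satisfies
`max_{0≤t≤T} ∫₀^l U² dx ≤ C · (sup |𝒬|)² · ∫₀^T∫₀^l u₂² dx dt`. -/
theorem sensitivity_L2_estimate
    (l T : ℝ) (hl : 0 < l) (hT : 0 < T)
    (a a' : ℝ → ℝ)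
    (ha : ∀ x ∈ Icc (0:ℝ) l, HasDerivWithinAt a (a' x) (Icc (0:ℝ) l) x)
    (ha'c : ContinuousOn a' (Icc (0:ℝ) l))
    (ha0 : a 0 = 0) (hal : a l = 0)
    (hapos : ∀ x ∈ Ioo (0:ℝ) l, 0 < a x) :
    ∃ C > 0, ∀ (q₁ Q : ℝ → ℝ) (u₂ U Ut Ux Uxx : ℝ → ℝ → ℝ),
      ContinuousOn q₁ (Icc (0:ℝ) l) → (∀ x ∈ Icc (0:ℝ) l, 0 ≤ q₁ x) →
      (∃ M, ∀ x ∈ Icc (0:ℝ) l, |Q x| ≤ M) →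
      ContinuousOn (fun p : ℝ × ℝ => u₂ p.1 p.2) (Icc (0:ℝ) l ×ˢ Icc (0:ℝ) T) →
      ContinuousOn (fun p : ℝ × ℝ => U p.1 p.2) (Icc (0:ℝ) l ×ˢ Icc (0:ℝ) T) →
      ContinuousOn (fun p : ℝ × ℝ => Ut p.1 p.2) (Icc (0:ℝ) l ×ˢ Ioc (0:ℝ) T) →
      ContinuousOn (fun p : ℝ × ℝ => Ux p.1 p.2) (Icc (0:ℝ) l ×ˢ Ioc (0:ℝ) T) →
      ContinuousOn (fun p : ℝ × ℝ => Uxx p.1 p.2) (Icc (0:ℝ) l ×ˢ Ioc (0:ℝ) T) →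
      (∀ x ∈ Icc (0:ℝ) l, ∀ t ∈ Ioc (0:ℝ) T,
        HasDerivWithinAt (fun τ => U x τ) (Ut x t) (Icc (0:ℝ) T) t) →
      (∀ x ∈ Icc (0:ℝ) l, ∀ t ∈ Ioc (0:ℝ) T,
        HasDerivWithinAt (fun s => U s t) (Ux x t) (Icc (0:ℝ) l) x) →
      (∀ x ∈ Icc (0:ℝ) l, ∀ t ∈ Ioc (0:ℝ) T,
        HasDerivWithinAt (fun s => Ux s t) (Uxx x t) (Icc (0:ℝ) l) x) →
      (∀ x ∈ Icc (0:ℝ) l, ∀ t ∈ Ioc (0:ℝ) T,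
        Ut x t - (a x * Uxx x t + a' x * Ux x t) + q₁ x * U x t = -(Q x * u₂ x t)) →
      (∀ x ∈ Icc (0:ℝ) l, U x 0 = 0) →
      (∃ M, ∀ x ∈ Ioo (0:ℝ) l, ∀ t ∈ Ioc (0:ℝ) T, |Ux x t| ≤ M) →
      ∀ t ∈ Icc (0:ℝ) T,
        (∫ x in (0:ℝ)..l, (U x t) ^ 2)
          ≤ C * (sSup ((fun x => |Q x|) '' Icc (0:ℝ) l)) ^ 2 *
              ∫ s in (0:ℝ)..T, ∫ x in (0:ℝ)..l, (u₂ x s) ^ 2 := by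
  refine ⟨Real.exp T, Real.exp_pos T, ?_⟩
  intro q₁ Q u₂ U Ut Ux Uxx _ hq₁ hQ hu₂c hUc hUtc _ hUxxc hUt hUx hUxx hPDE hU0 _ t ht
  set M := sSup ((fun x => |Q x|) '' Icc (0:ℝ) l)
  have hQM : ∀ x ∈ Icc (0:ℝ) l, |Q x| ≤ M := by
    obtain ⟨B, hB⟩ := hQ
    exact fun x hx => le_csSup ⟨B, forall_mem_image.2 hB⟩ (mem_image_of_mem _ hx)
  have hE0 : ∫ x in (0:ℝ)..l, U x 0 ^ 2 = 0 := by
    rw [intervalIntegral.integral_congr (g := fun _ => (0:ℝ)) fun x hx => by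
      simp [hU0 x (uIcc_of_le hl.le ▸ hx)]]
    simp
  have hrate : ∀ τ ∈ Ioo 0 T, ∫ x in (0:ℝ)..l, 2 * U x τ * Ut x τ ≤
      (∫ x in (0:ℝ)..l, U x τ ^ 2) + M ^ 2 * ∫ x in (0:ℝ)..l, u₂ x τ ^ 2 := by
    intro τ hτ
    have hτ' : τ ∈ Ioc 0 T := Ioo_subset_Ioc_self hτ
    exact integral_two_mul_mul_le_of_parabolic_eq hl.le ha ha'c ha0 hal (fun x hx => (hapos x hx).le) hq₁ hQM
      (hu₂c.uncurry_right τ (Ioc_subset_Icc_self hτ')) (fun x hx => hUx x hx τ hτ')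
      (fun x hx => hUxx x hx τ hτ') (hUxxc.uncurry_right τ hτ') (hUtc.uncurry_right τ hτ')
      (fun x hx => hPDE x hx τ hτ')
  calc ∫ x in (0:ℝ)..l, U x t ^ 2
      ≤ Real.exp (T - 0) * ∫ τ in (0:ℝ)..T, M ^ 2 * ∫ x in (0:ℝ)..l, u₂ x τ ^ 2 :=
        le_exp_mul_integral_of_hasDerivAt_le_add (E := fun τ => ∫ x in (0:ℝ)..l, U x τ ^ 2)
          (continuousOn_intervalIntegral_of_continuousOn_prod hl.le hT.le (hUc.pow 2)) hE0
          (fun τ hτ => hasDerivAt_intervalIntegral_sq hl.le hUc hUtc hUt hτ)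
          (continuousOn_const.mul
            (continuousOn_intervalIntegral_of_continuousOn_prod hl.le hT.le (hu₂c.pow 2)))
          (fun τ _ => mul_nonneg (sq_nonneg M)
            (intervalIntegral.integral_nonneg hl.le fun _ _ => sq_nonneg _))
          hrate ht
    _ = _ := by rw [sub_zero, intervalIntegral.integral_const_mul, mul_assoc]
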